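/- arXiv:2506.03658 — 2 statements merged into one kernel-verified Lean document; each statement's English description precedes it below -/
import Mathlib

section
/- Let E be a real normed vector space, N ≥ 1 an integer, T > 0, h = T/N, and t_ℓ = ℓh. Given u⁰, u¹, …, u^N ∈ E and the piecewise affine interpolant u_N, for every θ with 0 < θ ≤ h one has ∫₀^{T−θ} ‖u_N(s+θ) − u_N(s)‖⁴ ds ≤ 17 (θ/h)⁴ h Σ_{ℓ=1}^{N} ‖u^ℓ − u^{ℓ−1}‖⁴. -/
open MeasureTheory

/-- The piecewise affine interpolant of the values `u 0, …, u N` on the grid `tₗ = ℓ·h`: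
on `[t_{ℓ-1}, t_ℓ]` it equals `u (ℓ-1) + ((t - t_{ℓ-1})/h) • (u ℓ - u (ℓ-1))`. -/
noncomputable def affInterp {E : Type*} [NormedAddCommGroup E] [NormedSpace ℝ E]
    (N : ℕ) (h : ℝ) (u : ℕ → E) (t : ℝ) : E :=
  u (min (⌊t / h⌋₊) (N - 1)) +
    ((t - (min (⌊t / h⌋₊) (N - 1) : ℕ) * h) / h) •
      (u (min (⌊t / h⌋₊) (N - 1) + 1) - u (min (⌊t / h⌋₊) (N - 1)))

/-!
On a grid cell the interpolant is affine, so for `θ ≤ h` the increment `u_N(s + θ) - u_N(s)` is a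
combination of at most two consecutive jumps `u (ℓ + 1) - u ℓ` with nonnegative weights summing to
`θ / h`. Its fourth power on the `ℓ`-th cell is therefore at most `(θ / h) ^ 4` times the sum of the
fourth powers of these jumps. Integrating cell by cell, every jump is counted at most twice.
-/

open Set Finset

lemma norm_smul_add_smul_pow_le {E : Type*} [SeminormedAddCommGroup E] [NormedSpace ℝ E]
    (n : ℕ) {a b : ℝ} (ha : 0 ≤ a) (hb : 0 ≤ b) (x y : E) :
    ‖a • x + b • y‖ ^ n ≤ (a + b) ^ n * (‖x‖ ^ n + ‖y‖ ^ n) := by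
  have hmax : ‖a • x + b • y‖ ≤ (a + b) * max ‖x‖ ‖y‖ :=
    calc ‖a • x + b • y‖ ≤ a * ‖x‖ + b * ‖y‖ := by
          simpa [norm_smul, abs_of_nonneg ha, abs_of_nonneg hb] using norm_add_le (a • x) (b • y)
      _ ≤ (a + b) * max ‖x‖ ‖y‖ := by
          rw [add_mul]
          gcongr
          exacts [le_max_left _ _, le_max_right _ _]
  have hpow : max ‖x‖ ‖y‖ ^ n ≤ ‖x‖ ^ n + ‖y‖ ^ n := by
    rcases max_cases ‖x‖ ‖y‖ with ⟨he, -⟩ | ⟨he, -⟩ <;> rw [he] <;> simp [pow_nonneg]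
  calc ‖a • x + b • y‖ ^ n ≤ ((a + b) * max ‖x‖ ‖y‖) ^ n := by gcongr
    _ ≤ (a + b) ^ n * (‖x‖ ^ n + ‖y‖ ^ n) := by rw [mul_pow]; gcongr

lemma sum_range_ite_succ_lt_le {a : ℕ → ℝ} (ha : ∀ k, 0 ≤ a k) :
    ∀ N : ℕ, ∑ ℓ ∈ range N, (if ℓ + 1 < N then a (ℓ + 1) else 0) ≤ ∑ ℓ ∈ range N, a ℓ
  | 0 => by simp
  | N + 1 => by
    rw [sum_range_succ, if_neg (lt_irrefl _), add_zero, sum_range_succ']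
    have hshift : ∑ ℓ ∈ range N, (if ℓ + 1 < N + 1 then a (ℓ + 1) else 0) =
        ∑ ℓ ∈ range N, a (ℓ + 1) :=
      sum_congr rfl fun ℓ hℓ => if_pos (by simpa using hℓ)
    linarith [ha 0]

lemma intervalIntegral_le_mul_sum_of_le_on_grid {f : ℝ → ℝ} {N : ℕ} {h b : ℝ} (hh : 0 ≤ h)
    (hb : 0 ≤ b) (hbN : b ≤ N * h) (hf : IntervalIntegrable f volume 0 b)
    {B : ℕ → ℝ} (hB : ∀ ℓ, 0 ≤ B ℓ)
    (hfB : ∀ ℓ < N, ∀ s ∈ Ioo (ℓ * h) ((ℓ + 1) * h), s < b → f s ≤ B ℓ) :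
    ∫ s in (0 : ℝ)..b, f s ≤ h * ∑ ℓ ∈ range N, B ℓ := by
  set a : ℕ → ℝ := fun ℓ => min (ℓ * h) b with ha
  have ha_mono : Monotone a := fun k l hkl => by
    simp only [ha]; gcongr
  have ha_succ : ∀ ℓ, a (ℓ + 1) ≤ a ℓ + h := fun ℓ =>
    calc min (((ℓ + 1 : ℕ) : ℝ) * h) b ≤ min (ℓ * h + h) (b + h) := by
          push_cast; rw [add_mul, one_mul]; gcongr; linarith
      _ = a ℓ + h := min_add_add_right _ _ _
  have ha_mem : ∀ ℓ, a ℓ ∈ Icc 0 b := fun ℓ => ⟨le_min (by positivity) hb, min_le_right _ _⟩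
  have hint : ∀ ℓ < N, IntervalIntegrable f volume (a ℓ) (a (ℓ + 1)) :=
    fun ℓ _ => hf.mono_set <|
      uIcc_subset_uIcc (Icc_subset_uIcc (ha_mem ℓ)) (Icc_subset_uIcc (ha_mem (ℓ + 1)))
  have hpiece : ∀ ℓ < N, ∫ s in a ℓ..a (ℓ + 1), f s ≤ h * B ℓ := fun ℓ hℓ =>
    calc ∫ s in a ℓ..a (ℓ + 1), f s ≤ ∫ _ in a ℓ..a (ℓ + 1), B ℓ := by
          refine intervalIntegral.integral_mono_on_of_le_Ioo (ha_mono ℓ.le_succ) (hint ℓ hℓ)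
            intervalIntegrable_const fun s hs => hfB ℓ hℓ s ⟨?_, ?_⟩ ?_
          · exact (min_lt_iff.1 hs.1).resolve_right fun hbs =>
              (hbs.trans hs.2).not_ge (min_le_right _ _)
          · exact_mod_cast hs.2.trans_le (min_le_left _ _)
          · exact hs.2.trans_le (min_le_right _ _)
      _ = (a (ℓ + 1) - a ℓ) * B ℓ := by simp
      _ ≤ h * B ℓ := mul_le_mul_of_nonneg_right (by linarith [ha_succ ℓ]) (hB ℓ)
  have ha0 : a 0 = 0 := by simp [ha, hb]
  have haN : a N = b := min_eq_right hbN
  calc ∫ s in (0 : ℝ)..b, f s = ∑ ℓ ∈ range N, ∫ s in a ℓ..a (ℓ + 1), f s := by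
        rw [intervalIntegral.sum_integral_adjacent_intervals hint, ha0, haN]
    _ ≤ ∑ ℓ ∈ range N, h * B ℓ := sum_le_sum fun ℓ hℓ => hpiece ℓ (mem_range.1 hℓ)
    _ = h * ∑ ℓ ∈ range N, B ℓ := (mul_sum _ _ _).symm

section AffInterp

variable {E : Type*} [NormedAddCommGroup E] [NormedSpace ℝ E] {N : ℕ} {h : ℝ} (u : ℕ → E)

lemma affInterp_of_mem_Icc (hh : 0 < h) {ℓ : ℕ} (hℓ : ℓ < N) {t : ℝ}
    (ht : t ∈ Icc (ℓ * h) ((ℓ + 1) * h)) :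
    affInterp N h u t = u ℓ + ((t - ℓ * h) / h) • (u (ℓ + 1) - u ℓ) := by
  rcases ht.2.lt_or_eq with hlt | rfl
  · have hfloor : ⌊t / h⌋₊ = ℓ := by
      rw [Nat.floor_eq_iff (div_nonneg ((by positivity : (0:ℝ) ≤ ℓ * h).trans ht.1) hh.le),
        le_div_iff₀ hh, div_lt_iff₀ hh]
      exact ⟨ht.1, hlt⟩
    rw [affInterp, hfloor, min_eq_left (by omega)]
  · -- at the right endpoint the floor jumps to `ℓ + 1`; both pieces take the value `u (ℓ + 1)`
    have hfloor : ⌊((ℓ : ℝ) + 1) * h / h⌋₊ = ℓ + 1 := by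
      rw [mul_div_cancel_right₀ _ hh.ne']; exact_mod_cast Nat.floor_natCast (ℓ + 1)
    have hright : (((ℓ : ℝ) + 1) * h - ℓ * h) / h = 1 := by field_simp; ring
    rw [affInterp, hfloor, hright, one_smul, add_sub_cancel]
    rcases Nat.lt_or_ge (ℓ + 1) N with hlt | hge
    · rw [min_eq_left (by omega)]; push_cast; simp
    · rw [min_eq_right (by omega), show N - 1 = ℓ by omega, hright, one_smul, add_sub_cancel]

lemma continuousOn_affInterp (hh : 0 < h) : ContinuousOn (affInterp N h u) (Icc 0 (N * h)) := by
  suffices ∀ n ≤ N, ContinuousOn (affInterp N h u) (Icc 0 (n * h)) from this N le_rfl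
  intro n
  induction n with
  | zero => intro _; simp
  | succ n ih =>
    intro hn
    have hpiece : ContinuousOn (affInterp N h u) (Icc (n * h) ((n + 1) * h)) :=
      (Continuous.continuousOn (by fun_prop)).congr fun t ht => affInterp_of_mem_Icc u hh hn ht
    push_cast
    rw [← Icc_union_Icc_eq_Icc (b := n * h) (by positivity) (by nlinarith)]
    exact (ih (by omega)).union_of_isClosed hpiece isClosed_Icc isClosed_Icc

lemma norm_affInterp_add_sub_pow_le (n : ℕ) (hh : 0 < h) {θ : ℝ} (hθ : 0 ≤ θ) (hθh : θ ≤ h)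
    {ℓ : ℕ} (hℓ : ℓ < N) {s : ℝ} (hs : s ∈ Icc (ℓ * h) ((ℓ + 1) * h))
    (hsθ : s + θ ≤ N * h) :
    ‖affInterp N h u (s + θ) - affInterp N h u s‖ ^ n ≤
      (θ / h) ^ n * (‖u (ℓ + 1) - u ℓ‖ ^ n +
        if ℓ + 1 < N then ‖u (ℓ + 1 + 1) - u (ℓ + 1)‖ ^ n else 0) := by
  rw [affInterp_of_mem_Icc u hh hℓ hs]
  rcases le_or_gt (s + θ) ((ℓ + 1) * h) with hsame | hnext
  · rw [affInterp_of_mem_Icc u hh hℓ ⟨by linarith [hs.1], hsame⟩]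
    have hdiff : u ℓ + ((s + θ - ℓ * h) / h) • (u (ℓ + 1) - u ℓ) -
        (u ℓ + ((s - ℓ * h) / h) • (u (ℓ + 1) - u ℓ)) = (θ / h) • (u (ℓ + 1) - u ℓ) := by
      match_scalars <;> ring
    have hrest : 0 ≤ if ℓ + 1 < N then ‖u (ℓ + 1 + 1) - u (ℓ + 1)‖ ^ n else 0 := by
      split_ifs <;> positivity
    rw [hdiff, norm_smul, mul_pow, Real.norm_of_nonneg (by positivity)]
    gcongr
    exact le_add_of_nonneg_right hrest
  · have hℓ' : ℓ + 1 < N := by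
      have : ((ℓ : ℝ) + 1) * h < N * h := hnext.trans_le hsθ
      exact_mod_cast lt_of_mul_lt_mul_right this hh.le
    rw [if_pos hℓ', affInterp_of_mem_Icc u hh hℓ' (by push_cast; constructor <;> linarith [hs.2])]
    -- the increment splits at the grid point `(ℓ + 1) * h`
    have hdiff :
        u (ℓ + 1) + ((s + θ - ((ℓ + 1 : ℕ) : ℝ) * h) / h) • (u (ℓ + 1 + 1) - u (ℓ + 1)) -
          (u ℓ + ((s - ℓ * h) / h) • (u (ℓ + 1) - u ℓ)) =
        ((((ℓ : ℝ) + 1) * h - s) / h) • (u (ℓ + 1) - u ℓ) +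
          ((s + θ - ((ℓ : ℝ) + 1) * h) / h) • (u (ℓ + 1 + 1) - u (ℓ + 1)) := by
      push_cast
      match_scalars <;> field_simp <;> ring
    have hsum : (((ℓ : ℝ) + 1) * h - s) / h + (s + θ - ((ℓ : ℝ) + 1) * h) / h = θ / h := by
      field_simp; ring
    rw [hdiff, ← hsum]
    exact norm_smul_add_smul_pow_le n (div_nonneg (by linarith [hs.2]) hh.le)
      (div_nonneg (sub_nonneg.2 hnext.le) hh.le) _ _

lemma intervalIntegrable_norm_affInterp_add_sub_pow (n : ℕ) (hh : 0 < h) {θ b : ℝ} (hθ : 0 ≤ θ)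
    (hb : 0 ≤ b) (hbθ : b + θ ≤ N * h) :
    IntervalIntegrable (fun s => ‖affInterp N h u (s + θ) - affInterp N h u s‖ ^ n) volume 0 b := by
  refine ContinuousOn.intervalIntegrable ?_
  rw [uIcc_of_le hb]
  have hcont := continuousOn_affInterp (N := N) u hh
  refine ((hcont.comp (continuous_add_const θ).continuousOn fun s hs => ?_).sub
    (hcont.mono fun s hs => ?_)).norm.pow n <;> constructor <;> linarith [hs.1, hs.2]

end AffInterp

theorem affInterp_shift_small_general {E : Type*}
    [NormedAddCommGroup E] [NormedSpace ℝ E]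
    (N : ℕ) (T : ℝ) (h : ℝ) (hh : h = T / N) (u : ℕ → E)
    (θ : ℝ) (hθ0 : 0 < θ) (hθh : θ ≤ h) :
    (∫ s in (0:ℝ)..(T - θ), ‖affInterp N h u (s + θ) - affInterp N h u s‖ ^ 4) ≤
      17 * (θ / h) ^ 4 * h * ∑ ℓ ∈ Finset.range N, ‖u (ℓ + 1) - u ℓ‖ ^ 4 := by
  have hh0 : 0 < h := hθ0.trans_le hθh
  have hN : (N : ℝ) ≠ 0 := fun hN => by simp [hh, hN] at hh0
  have hNh : N * h = T := by rw [hh]; field_simp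
  have hTθ : 0 ≤ T - θ := by
    have : (1 : ℝ) ≤ N := Nat.one_le_cast.2 (Nat.one_le_iff_ne_zero.2 (by exact_mod_cast hN))
    nlinarith
  set w : ℕ → ℝ := fun k => ‖u (k + 1) - u k‖ ^ 4
  have hw : ∀ k, 0 ≤ w k := fun k => by positivity
  calc (∫ s in (0:ℝ)..(T - θ), ‖affInterp N h u (s + θ) - affInterp N h u s‖ ^ 4)
      ≤ h * ∑ ℓ ∈ range N, (θ / h) ^ 4 * (w ℓ + if ℓ + 1 < N then w (ℓ + 1) else 0) := by
        refine intervalIntegral_le_mul_sum_of_le_on_grid hh0.le hTθ (by linarith)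
          (intervalIntegrable_norm_affInterp_add_sub_pow u 4 hh0 hθ0.le hTθ (by linarith))
          (fun ℓ => ?_) fun ℓ hℓ s hs hsb =>
            norm_affInterp_add_sub_pow_le u 4 hh0 hθ0.le hθh hℓ (Ioo_subset_Icc_self hs)
              (by linarith)
        split_ifs <;> positivity
    _ = (θ / h) ^ 4 * h *
          (∑ ℓ ∈ range N, w ℓ + ∑ ℓ ∈ range N, if ℓ + 1 < N then w (ℓ + 1) else 0) := by
        rw [← mul_sum, sum_add_distrib]; ring
    _ ≤ (θ / h) ^ 4 * h * (2 * ∑ ℓ ∈ range N, w ℓ) := by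
        gcongr
        linarith [sum_range_ite_succ_lt_le hw N]
    _ ≤ 17 * (θ / h) ^ 4 * h * ∑ ℓ ∈ range N, w ℓ := by
        have : 0 ≤ (θ / h) ^ 4 * h * ∑ ℓ ∈ range N, w ℓ := by positivity
        linarith

/-- Small-shift time-regularity estimate: for `0 < θ ≤ h`,
`∫₀^{T−θ} ‖u_N(s+θ) − u_N(s)‖⁴ ds ≤ 17 (θ/h)⁴ h Σ_{ℓ=1}^N ‖uℓ − u(ℓ−1)‖⁴`. -/
theorem affInterp_shift_small {E : Type*}
    [NormedAddCommGroup E] [NormedSpace ℝ E]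
    (N : ℕ) (hN : 1 ≤ N) (T : ℝ) (hT : 0 < T) (h : ℝ) (hh : h = T / N) (u : ℕ → E)
    (θ : ℝ) (hθ0 : 0 < θ) (hθh : θ ≤ h) :
    (∫ s in (0:ℝ)..(T - θ), ‖affInterp N h u (s + θ) - affInterp N h u s‖ ^ 4) ≤
      17 * (θ / h) ^ 4 * h * ∑ ℓ ∈ Finset.range N, ‖u (ℓ + 1) - u ℓ‖ ^ 4 :=
  affInterp_shift_small_general N T h hh u θ hθ0 hθh
end

section
/- Let E be a real normed vector space, N ≥ 1 an integer, T > 0, h = T/N, and t_ℓ = ℓh. Given u⁰, u¹, …, u^N ∈ E and the piecewise affine interpolant u_N, for every θ with h ≤ θ ≤ T, setting j = ⌊θ/h⌋ (so 1 ≤ j ≤ N), one has ∫₀^{T−θ} ‖u_N(s+θ) − u_N(s)‖⁴ ds ≤ 2048 h Σ_{ℓ=1}^{N} ‖u^ℓ − u^{ℓ−1}‖⁴ + 64 h Σ_{ℓ=0}^{N−j} ‖u^{ℓ+j} − u^ℓ‖⁴. -/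
/-!
If `s` lies in the grid cell `[m h, (m+1) h)`, then `s + θ` lies in `[(m+j) h, (m+j+2) h]`.
On `[p h, (p+n) h]` the interpolant differs from the node value `u p` by at most the `n`
following increments, so the triangle inequality through `u (m+j)` and `u m` bounds
`‖u_N(s+θ) - u_N(s)‖` by `‖u (m+j) - u m‖` plus three increments; after
`(a+b+c+d)^4 ≤ 64 (a^4+b^4+c^4+d^4)` this bound depends on `s` only through `m = ⌊s/h⌋`.
Integrating over the `N - j + 1` cells meeting `(0, T - θ]` counts each increment at most three
times, which gives the estimate even with `192` in place of `2048`.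
-/

open MeasureTheory

open Finset Set

lemma add_add_add_pow_four_le {a b c d : ℝ} (ha : 0 ≤ a) (hb : 0 ≤ b) (hc : 0 ≤ c)
    (hd : 0 ≤ d) : (a + b + c + d) ^ 4 ≤ 64 * (a ^ 4 + b ^ 4 + c ^ 4 + d ^ 4) := by
  have key := pow_sum_le_card_mul_sum_pow (s := univ) (f := ![a, b, c, d])
    (by simp [Fin.forall_fin_succ, ha, hb, hc, hd]) 3
  norm_num [Fin.sum_univ_four] at key
  exact key

lemma sum_range_le_sum_range_of_eq_zero {f : ℕ → ℝ} {N : ℕ} (hf : ∀ i, 0 ≤ f i)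
    (hfN : ∀ i, N ≤ i → f i = 0) (K : ℕ) : ∑ i ∈ range K, f i ≤ ∑ i ∈ range N, f i := by
  rw [← sum_filter_of_ne (p := (· < N)) fun i _ hi => by by_contra h; exact hi (hfN i (by omega))]
  exact sum_le_sum_of_subset_of_nonneg (fun i hi => by simpa using (mem_filter.1 hi).2)
    fun i _ _ => hf i

lemma sum_range_shift_le_of_eq_zero {f : ℕ → ℝ} {N : ℕ} (hf : ∀ i, 0 ≤ f i)
    (hfN : ∀ i, N ≤ i → f i = 0) (M c : ℕ) :
    ∑ m ∈ range M, f (m + c) ≤ ∑ i ∈ range N, f i := by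
  calc ∑ m ∈ range M, f (m + c) ≤ ∑ i ∈ range c, f i + ∑ m ∈ range M, f (c + m) := by
        simp_rw [add_comm _ c]
        exact le_add_of_nonneg_left (sum_nonneg fun i _ => hf i)
    _ = ∑ i ∈ range (c + M), f i := (sum_range_add f c M).symm
    _ ≤ ∑ i ∈ range N, f i := sum_range_le_sum_range_of_eq_zero hf hfN _

section Increments

variable {E : Type*} [SeminormedAddCommGroup E] {N : ℕ} {u : ℕ → E}

-- Increments past the last node count as zero, so that shifted sums of them stay below the
-- full sum over `ℓ < N`.
def incrNorm (N : ℕ) (u : ℕ → E) (i : ℕ) : ℝ :=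
  if i < N then ‖u (i + 1) - u i‖ else 0

lemma incrNorm_nonneg (i : ℕ) : 0 ≤ incrNorm N u i := by
  unfold incrNorm; split_ifs <;> positivity

lemma sum_range_incrNorm_shift_pow_le {k : ℕ} (hk : k ≠ 0) (M c : ℕ) :
    ∑ m ∈ range M, incrNorm N u (m + c) ^ k ≤ ∑ ℓ ∈ range N, ‖u (ℓ + 1) - u ℓ‖ ^ k := by
  calc ∑ m ∈ range M, incrNorm N u (m + c) ^ k ≤ ∑ ℓ ∈ range N, incrNorm N u ℓ ^ k :=
        sum_range_shift_le_of_eq_zero (fun i => pow_nonneg (incrNorm_nonneg i) k)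
          (fun i hi => by simp [incrNorm, not_lt.2 hi, hk]) M c
    _ = ∑ ℓ ∈ range N, ‖u (ℓ + 1) - u ℓ‖ ^ k :=
        sum_congr rfl fun ℓ hℓ => by rw [incrNorm, if_pos (mem_range.1 hℓ)]

lemma sum_range_shift_cell_le (M j : ℕ) :
    ∑ m ∈ range M, (incrNorm N u (m + j) ^ 4 + incrNorm N u (m + j + 1) ^ 4 +
        ‖u (m + j) - u m‖ ^ 4 + incrNorm N u m ^ 4) ≤
      3 * ∑ ℓ ∈ range N, ‖u (ℓ + 1) - u ℓ‖ ^ 4 + ∑ m ∈ range M, ‖u (m + j) - u m‖ ^ 4 := by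
  have hshift (c : ℕ) := sum_range_incrNorm_shift_pow_le (N := N) (u := u) four_ne_zero M c
  have h0 := hshift 0
  have h1 := hshift (j + 1)
  simp only [add_zero, ← add_assoc] at h0 h1
  rw [sum_add_distrib, sum_add_distrib, sum_add_distrib]
  linarith [hshift j]

end Increments

section StepFunction

variable {h : ℝ} (g : ℕ → ℝ)

lemma integrableOn_comp_natFloor_div (hh : 0 ≤ h) (b : ℝ) :
    IntegrableOn (fun s => g ⌊s / h⌋₊) (Ioc 0 b) := by
  refine Measure.integrableOn_of_bounded (M := ∑ m ∈ range (⌊b / h⌋₊ + 1), |g m|)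
    (by simp) ((measurable_from_top.comp
      (Nat.measurable_floor.comp (measurable_id.div_const h))).aestronglyMeasurable) ?_
  rw [ae_restrict_iff' measurableSet_Ioc]
  refine ae_of_all _ fun s hs => ?_
  have hmem : ⌊s / h⌋₊ ∈ range (⌊b / h⌋₊ + 1) :=
    mem_range.2 (Nat.lt_succ_of_le (Nat.floor_mono (div_le_div_of_nonneg_right hs.2 hh)))
  exact single_le_sum (f := fun m => |g m|) (fun i _ => abs_nonneg _) hmem

lemma setIntegral_Ioc_comp_natFloor_div (hh : 0 < h) (M : ℕ) :
    ∫ s in Ioc 0 (M * h), g ⌊s / h⌋₊ = h * ∑ m ∈ range M, g m := by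
  induction M with
  | zero => simp
  | succ M ih =>
    have hM : (0 : ℝ) ≤ M * h := by positivity
    have hMM : (M : ℝ) * h ≤ (M + 1 : ℕ) * h := by push_cast; linarith
    have hcell : ∫ s in Ioo (M * h) ((M + 1 : ℕ) * h), g ⌊s / h⌋₊ = h * g M := by
      rw [setIntegral_congr_fun measurableSet_Ioo (g := fun _ => g M) fun s hs => ?_,
        setIntegral_const, measureReal_def, Real.volume_Ioo, smul_eq_mul,
        ENNReal.toReal_ofReal (by linarith)]
      · push_cast; ring
      · refine congrArg g ?_
        rw [Nat.floor_eq_iff (div_nonneg (hM.trans hs.1.le) hh.le), le_div_iff₀ hh,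
          div_lt_iff₀ hh]
        exact ⟨hs.1.le, by simpa using hs.2⟩
    rw [← Ioc_union_Ioc_eq_Ioc hM hMM, setIntegral_union (Ioc_disjoint_Ioc_of_le le_rfl)
      measurableSet_Ioc (integrableOn_comp_natFloor_div g hh.le _)
      ((integrableOn_comp_natFloor_div g hh.le _).mono_set (Ioc_subset_Ioc_left hM)), ih,
      integral_Ioc_eq_integral_Ioo, hcell, sum_range_succ]
    ring

lemma intervalIntegral_le_of_le_comp_natFloor_div {f : ℝ → ℝ} (hh : 0 < h) {b : ℝ}
    (hb : 0 ≤ b) {M : ℕ} (hbM : b ≤ M * h) (hg : ∀ m, 0 ≤ g m)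
    (hf : ∀ s ∈ Ioc 0 b, 0 ≤ f s) (hfg : ∀ s ∈ Ioc 0 b, f s ≤ g ⌊s / h⌋₊) :
    ∫ s in 0..b, f s ≤ h * ∑ m ∈ range M, g m := by
  rw [intervalIntegral.integral_of_le hb, ← setIntegral_Ioc_comp_natFloor_div g hh M]
  calc ∫ s in Ioc 0 b, f s ≤ ∫ s in Ioc 0 b, g ⌊s / h⌋₊ :=
        integral_mono_of_nonneg ((ae_restrict_iff' measurableSet_Ioc).2 (ae_of_all _ hf))
          (integrableOn_comp_natFloor_div g hh.le b)
          ((ae_restrict_iff' measurableSet_Ioc).2 (ae_of_all _ hfg))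
    _ ≤ ∫ s in Ioc 0 (M * h), g ⌊s / h⌋₊ :=
        setIntegral_mono_set (integrableOn_comp_natFloor_div g hh.le _)
          (ae_of_all _ fun s => hg _) (Ioc_subset_Ioc_right hbM).eventuallyLE

end StepFunction

section Interpolant

variable {E : Type*} [NormedAddCommGroup E] [NormedSpace ℝ E] {N : ℕ} {h : ℝ} {u : ℕ → E}

lemma affInterp_natCast_mul (hh : h ≠ 0) {p : ℕ} (hp : p ≤ N) :
    affInterp N h u (p * h) = u p := by
  unfold affInterp
  rw [mul_div_cancel_right₀ _ hh, Nat.floor_natCast]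
  rcases le_or_gt p (N - 1) with hpN | hpN
  · rw [min_eq_left hpN, sub_self, zero_div, zero_smul, add_zero]
  · obtain rfl : p = N := by omega
    have hp1 : p - 1 + 1 = p := by omega
    have hcoef : ((p : ℝ) * h - ((p - 1 : ℕ) : ℝ) * h) / h = 1 := by
      rw [Nat.cast_pred (by omega)]; field_simp; ring
    rw [min_eq_right hpN.le, hcoef, one_smul, hp1, add_sub_cancel]

lemma affInterp_eq_of_mem_Icc (hh : 0 < h) {k : ℕ} (hk : k < N) {t : ℝ}
    (ht : t ∈ Icc (k * h) ((k + 1) * h)) :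
    affInterp N h u t = u k + ((t - k * h) / h) • (u (k + 1) - u k) := by
  rcases ht.2.eq_or_lt with rfl | hlt
  · have hnode := affInterp_natCast_mul (u := u) hh.ne' (p := k + 1) hk
    push_cast at hnode
    rw [hnode, show ((k + 1) * h - k * h) / h = 1 by field_simp; ring, one_smul,
      add_sub_cancel]
  · have hfloor : ⌊t / h⌋₊ = k := by
      rw [Nat.floor_eq_iff (div_nonneg ((by positivity : (0 : ℝ) ≤ k * h).trans ht.1) hh.le),
        le_div_iff₀ hh, div_lt_iff₀ hh]
      exact ⟨ht.1, hlt⟩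
    unfold affInterp
    rw [hfloor, min_eq_left (by omega)]

lemma norm_affInterp_sub_le_of_mem_Icc (hh : 0 < h) {k : ℕ} (hk : k < N) {t : ℝ}
    (ht : t ∈ Icc (k * h) ((k + 1) * h)) :
    ‖affInterp N h u t - u k‖ ≤ ‖u (k + 1) - u k‖ := by
  rw [affInterp_eq_of_mem_Icc hh hk ht, add_sub_cancel_left, norm_smul]
  refine mul_le_of_le_one_left (norm_nonneg _) ?_
  rw [Real.norm_eq_abs, abs_le]
  constructor
  · linarith [div_nonneg (sub_nonneg.2 ht.1) hh.le]
  · rw [div_le_one hh]; linarith [ht.2]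

lemma norm_affInterp_sub_le_sum_incrNorm (hh : 0 < h) (p n : ℕ) {t : ℝ} (hpt : p * h ≤ t)
    (htn : t ≤ (p + n) * h) (htN : t ≤ N * h) :
    ‖affInterp N h u t - u p‖ ≤ ∑ i ∈ range n, incrNorm N u (p + i) := by
  induction n generalizing t with
  | zero =>
    have hp : p ≤ N := by exact_mod_cast le_of_mul_le_mul_right (hpt.trans htN) hh
    rw [le_antisymm (by simpa using htn) hpt, affInterp_natCast_mul hh.ne' hp]
    simp
  | succ n ih =>
    rw [sum_range_succ]
    by_cases htn' : t ≤ (p + n) * h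
    · linarith [ih hpt htn' htN, incrNorm_nonneg (N := N) (u := u) (p + n)]
    · push Not at htn'
      have hpn : p + n < N := by
        exact_mod_cast lt_of_mul_lt_mul_right (htn'.trans_le htN) hh.le
      have hcell : ‖affInterp N h u t - u (p + n)‖ ≤ incrNorm N u (p + n) := by
        rw [incrNorm, if_pos hpn]
        exact norm_affInterp_sub_le_of_mem_Icc hh hpn ⟨by push_cast; linarith, by
          push_cast at htn ⊢; linarith⟩
      have hnode := ih (t := (p + n) * h) (by nlinarith [n.cast_nonneg (α := ℝ)]) le_rfl
        (by linarith)
      rw [show ((p : ℝ) + n) = ((p + n : ℕ) : ℝ) by push_cast; rfl,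
        affInterp_natCast_mul hh.ne' hpn.le] at hnode
      linarith [norm_sub_le_norm_sub_add_norm_sub (affInterp N h u t) (u (p + n)) (u p)]

lemma norm_affInterp_shift_sub_pow_four_le (hh : 0 < h) {θ : ℝ} {j : ℕ} (hjθ : j * h ≤ θ)
    (hθj : θ ≤ (j + 1) * h) {s : ℝ} (hs : 0 ≤ s) (hsθ : s + θ ≤ N * h) :
    ‖affInterp N h u (s + θ) - affInterp N h u s‖ ^ 4 ≤
      64 * (incrNorm N u (⌊s / h⌋₊ + j) ^ 4 + incrNorm N u (⌊s / h⌋₊ + j + 1) ^ 4 +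
        ‖u (⌊s / h⌋₊ + j) - u ⌊s / h⌋₊‖ ^ 4 + incrNorm N u ⌊s / h⌋₊ ^ 4) := by
  set m := ⌊s / h⌋₊
  have hms : m * h ≤ s := (le_div_iff₀ hh).1 (Nat.floor_le (div_nonneg hs hh.le))
  have hsm : s < (m + 1) * h := (div_lt_iff₀ hh).1 (Nat.lt_floor_add_one _)
  have hθ : 0 ≤ θ := (by positivity : (0 : ℝ) ≤ j * h).trans hjθ
  have hlate := norm_affInterp_sub_le_sum_incrNorm (N := N) (u := u) hh (m + j) 2
    (t := s + θ) (by push_cast; linarith) (by push_cast; linarith) hsθ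
  have hearly := norm_affInterp_sub_le_sum_incrNorm (N := N) (u := u) hh m 1 (t := s) hms
    (by push_cast; linarith) (by linarith)
  simp only [sum_range_succ, sum_range_zero, zero_add, add_zero] at hlate hearly
  have htriangle : ‖affInterp N h u (s + θ) - affInterp N h u s‖ ≤
      incrNorm N u (m + j) + incrNorm N u (m + j + 1) + ‖u (m + j) - u m‖ +
        incrNorm N u m :=
    calc ‖affInterp N h u (s + θ) - affInterp N h u s‖
        = ‖(affInterp N h u (s + θ) - u (m + j)) + (u (m + j) - u m) +
            (u m - affInterp N h u s)‖ := by abel_nf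
      _ ≤ ‖affInterp N h u (s + θ) - u (m + j)‖ + ‖u (m + j) - u m‖ +
            ‖u m - affInterp N h u s‖ := norm_add₃_le
      _ ≤ _ := by rw [norm_sub_rev (u m)]; linarith
  exact (pow_le_pow_left₀ (norm_nonneg _) htriangle 4).trans
    (add_add_add_pow_four_le (incrNorm_nonneg _) (incrNorm_nonneg _) (norm_nonneg _)
      (incrNorm_nonneg _))

end Interpolant

/-- Large-shift time-regularity estimate: for `h ≤ θ ≤ T` and `j = ⌊θ/h⌋` (so `1 ≤ j ≤ N`),
`∫₀^{T−θ} ‖u_N(s+θ) − u_N(s)‖⁴ ds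
  ≤ 2048 h Σ_{ℓ=1}^N ‖uℓ − u(ℓ−1)‖⁴ + 64 h Σ_{ℓ=0}^{N−j} ‖u(ℓ+j) − uℓ‖⁴`. -/
theorem affInterp_shift_large {E : Type*}
    [NormedAddCommGroup E] [NormedSpace ℝ E]
    (N : ℕ) (hN : 1 ≤ N) (T : ℝ) (hT : 0 < T) (h : ℝ) (hh : h = T / N) (u : ℕ → E)
    (θ : ℝ) (hθ1 : h ≤ θ) (hθ2 : θ ≤ T) :
    1 ≤ ⌊θ / h⌋₊ ∧ ⌊θ / h⌋₊ ≤ N ∧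
    (∫ s in (0:ℝ)..(T - θ), ‖affInterp N h u (s + θ) - affInterp N h u s‖ ^ 4) ≤
      2048 * h * ∑ ℓ ∈ Finset.range N, ‖u (ℓ + 1) - u ℓ‖ ^ 4 +
        64 * h * ∑ ℓ ∈ Finset.range (N - ⌊θ / h⌋₊ + 1), ‖u (ℓ + ⌊θ / h⌋₊) - u ℓ‖ ^ 4 := by
  have hh0 : 0 < h := by rw [hh]; exact div_pos hT (by exact_mod_cast hN)
  have hNh : N * h = T := by rw [hh]; field_simp
  set j := ⌊θ / h⌋₊
  have hjθ : j * h ≤ θ := (le_div_iff₀ hh0).1 (Nat.floor_le (div_nonneg (by linarith) hh0.le))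
  have hθj : θ < (j + 1) * h := (div_lt_iff₀ hh0).1 (Nat.lt_floor_add_one _)
  have hj1 : 1 ≤ j := Nat.le_floor (by rw [Nat.cast_one, le_div_iff₀ hh0, one_mul]; exact hθ1)
  have hjN : j ≤ N := Nat.floor_le_of_le (by rw [div_le_iff₀ hh0, hNh]; exact hθ2)
  refine ⟨hj1, hjN, ?_⟩
  have hintegral := intervalIntegral_le_of_le_comp_natFloor_div
    (fun m => 64 * (incrNorm N u (m + j) ^ 4 + incrNorm N u (m + j + 1) ^ 4 +
      ‖u (m + j) - u m‖ ^ 4 + incrNorm N u m ^ 4)) hh0 (b := T - θ) (M := N - j + 1)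
    (by linarith) (by push_cast [Nat.cast_sub hjN]; linarith) (fun m => by positivity)
    (fun s _ => pow_nonneg (norm_nonneg _) 4) fun s hs =>
      norm_affInterp_shift_sub_pow_four_le (u := u) hh0 hjθ hθj.le hs.1.le (by linarith [hs.2])
  have hcells := sum_range_shift_cell_le (N := N) (u := u) (N - j + 1) j
  have hS : 0 ≤ ∑ ℓ ∈ range N, ‖u (ℓ + 1) - u ℓ‖ ^ 4 := sum_nonneg fun _ _ => by positivity
  rw [← mul_sum] at hintegral
  nlinarith [mul_le_mul_of_nonneg_left hcells hh0.le]
end
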